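/- Let C be a planar convex body that is k_C-rotationally symmetric about a point p in its interior, where k_C is a composite integer whose smallest divisor χ greater than 1 satisfies χ ≥ 3, and let q = k_C / χ be the largest divisor of k_C smaller than k_C. Then the minimum of the values d_M(P_k) over the divisors k > 1 of k_C is attained uniquely by d_M(P_{k_C}) — equivalently, d_M(P_q) > d_M(P_{k_C}) — if and only if d_M(P_q) ≠ R. -/

import Mathlib

/-!
Rotating a point of `C` about `p` by a suitable multiple of `2π/k` moves it into the sector `S_k`
without changing its distance to `p`, so `R ≤ d_M(P_k)` for every `k ≥ 3` with `C`
`k`-rotationally symmetric. Since `k_C` is composite with smallest prime factor at least `3`,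
`k_C ≥ 9` and `S_{k_C}` has opening at most `π/3`; two points of such a wedge are no farther
apart than the farther of them is from the apex, so `d_M(P_{k_C}) = R`. Every divisor `1 < k < k_C`
satisfies `3 ≤ k ≤ q`, and sectors shrink as `k` grows, so `d_M(P_k) ≥ d_M(P_q) ≥ R`.
-/

open Metric Set

/-- Rotation of angle `α` about the point `p` in the plane `ℂ`. -/
noncomputable def rot (p : ℂ) (α : ℝ) : ℂ → ℂ :=
  fun z => p + Complex.exp (α * Complex.I) * (z - p)

/-- A planar convex body: a compact convex subset of the plane with nonempty interior. -/
def IsConvexBody (C : Set ℂ) : Prop :=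
  IsCompact C ∧ Convex ℝ C ∧ (interior C).Nonempty

/-- `C` is `k`-rotationally symmetric about `p`: the rotation of angle `2π/k`
about `p` maps `C` onto itself. -/
def IsRotSym (C : Set ℂ) (p : ℂ) (k : ℕ) : Prop :=
  rot p (2 * Real.pi / k) '' C = C

/-- The closed convex sector at `p` spanned by `x - p` and `ρ_k(x) - p`. -/
noncomputable def sector (p x : ℂ) (k : ℕ) : Set ℂ :=
  {z | ∃ a b : ℝ, 0 ≤ a ∧ 0 ≤ b ∧
    z = p + (a : ℂ) * (x - p) + (b : ℂ) * (rot p (2 * Real.pi / k) x - p)}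

/-- The maximum relative diameter of the standard `k`-partition of `C`
(with center `p` and endpoint `x`): the diameter of one piece `C ∩ S_k`. -/
noncomputable def dM (C : Set ℂ) (p x : ℂ) (k : ℕ) : ℝ :=
  Metric.diam (C ∩ sector p x k)

/-- The circumradius of `C` with respect to `p`: `sup_{y ∈ C} dist p y`. -/
noncomputable def circumrad (C : Set ℂ) (p : ℂ) : ℝ :=
  ⨆ y ∈ C, dist p y

open Complex ComplexConjugate

lemma rot_sub_center (p : ℂ) (α : ℝ) (z : ℂ) : rot p α z - p = exp (α * I) * (z - p) :=
  add_sub_cancel_left _ _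

lemma dist_rot_center (p : ℂ) (α : ℝ) (z : ℂ) : dist p (rot p α z) = dist p z := by
  rw [dist_comm, dist_eq, rot_sub_center, norm_mul, norm_exp_ofReal_mul_I, one_mul,
    ← dist_eq, dist_comm]

lemma rot_rot (p : ℂ) (α β : ℝ) (z : ℂ) : rot p α (rot p β z) = rot p (α + β) z := by
  simp only [rot, add_sub_cancel_left, ofReal_add, add_mul, exp_add]
  ring

lemma rot_zero (p : ℂ) : rot p 0 = id := by
  funext z
  simp [rot]

lemma image_rot_add {C : Set ℂ} {p : ℂ} {α β : ℝ} (hα : rot p α '' C = C)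
    (hβ : rot p β '' C = C) : rot p (α + β) '' C = C := by
  rw [← funext (rot_rot p α β), ← image_image, hβ, hα]

lemma image_rot_int_mul {C : Set ℂ} {p : ℂ} {α : ℝ} (h : rot p α '' C = C) (n : ℤ) :
    rot p (n * α) '' C = C := by
  have hneg : rot p (-α) '' C = C := by
    conv_lhs => rw [← h]
    rw [image_image]
    simp only [rot_rot, neg_add_cancel, rot_zero, id, image_id']
  induction n using Int.induction_on with
  | zero => simp [rot_zero]
  | succ n ih =>
    rw [show ((n + 1 : ℤ) : ℝ) * α = α + n * α by push_cast; ring]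
    exact image_rot_add h ih
  | pred n ih =>
    rw [show ((-n - 1 : ℤ) : ℝ) * α = -α + (-n : ℤ) * α by push_cast; ring]
    exact image_rot_add hneg ih

lemma IsRotSym.of_dvd {C : Set ℂ} {p : ℂ} {k n : ℕ} (h : IsRotSym C p n) (hkn : k ∣ n)
    (hn : n ≠ 0) : IsRotSym C p k := by
  have hk : (k : ℝ) ≠ 0 := by exact_mod_cast ne_zero_of_dvd_ne_zero hn hkn
  have := image_rot_int_mul h (n / k : ℕ)
  rwa [Int.cast_natCast, Nat.cast_div hkn hk, div_mul_div_comm, mul_comm (n : ℝ),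
    mul_div_mul_right _ _ (by exact_mod_cast hn)] at this

lemma two_pi_div_mem_Ioo {k : ℕ} (hk : 3 ≤ k) : 2 * Real.pi / k ∈ Ioo 0 Real.pi := by
  have hk' : (3 : ℝ) ≤ k := by exact_mod_cast hk
  refine ⟨by positivity, ?_⟩
  rw [div_lt_iff₀ (by positivity)]
  nlinarith [Real.pi_pos]

def wedge (α : ℝ) : Set ℂ :=
  {w | ∃ a b : ℝ, 0 ≤ a ∧ 0 ≤ b ∧ w = a + b * exp (α * I)}

lemma zero_mem_wedge (α : ℝ) : (0 : ℂ) ∈ wedge α :=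
  ⟨0, 0, le_rfl, le_rfl, by simp⟩

lemma ofReal_mul_mem_wedge {r α : ℝ} {w : ℂ} (hr : 0 ≤ r) (hw : w ∈ wedge α) :
    (r : ℂ) * w ∈ wedge α := by
  obtain ⟨a, b, ha, hb, rfl⟩ := hw
  exact ⟨r * a, r * b, mul_nonneg hr ha, mul_nonneg hr hb, by push_cast; ring⟩

lemma exp_mem_wedge {φ α : ℝ} (hφ : φ ∈ Icc 0 α) (hα : α ∈ Ioo 0 Real.pi) :
    exp (φ * I) ∈ wedge α := by
  have hsin : 0 < Real.sin α := Real.sin_pos_of_pos_of_lt_pi hα.1 hα.2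
  refine ⟨Real.sin (α - φ) / Real.sin α, Real.sin φ / Real.sin α,
    div_nonneg (Real.sin_nonneg_of_nonneg_of_le_pi (by linarith [hφ.2]) (by linarith [hφ.1, hα.2]))
      hsin.le,
    div_nonneg (Real.sin_nonneg_of_nonneg_of_le_pi hφ.1 (by linarith [hφ.2, hα.2])) hsin.le, ?_⟩
  apply Complex.ext <;>
    simp only [add_re, add_im, mul_re, mul_im, ofReal_re, ofReal_im, exp_ofReal_mul_I_re,
      exp_ofReal_mul_I_im, Real.sin_sub] <;>
    field_simp <;> ring

lemma wedge_subset_wedge {β α : ℝ} (hβ : β ∈ Icc 0 α) (hα : α ∈ Ioo 0 Real.pi) :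
    wedge β ⊆ wedge α := by
  rintro _ ⟨a, b, ha, hb, rfl⟩
  obtain ⟨a', b', ha', hb', he⟩ := exp_mem_wedge hβ hα
  exact ⟨a + b * a', b * b', by positivity, by positivity, by rw [he]; push_cast; ring⟩

lemma norm_mul_norm_le_two_mul_re_mul_conj {α : ℝ} (hα : 1 / 2 ≤ Real.cos α) {w w' : ℂ}
    (hw : w ∈ wedge α) (hw' : w' ∈ wedge α) : ‖w‖ * ‖w'‖ ≤ 2 * (w * conj w').re := by
  obtain ⟨a, b, ha, hb, rfl⟩ := hw
  obtain ⟨a', b', ha', hb', rfl⟩ := hw'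
  have hre : ((a + b * exp (α * I)) * conj (a' + b' * exp (α * I))).re
      = a * a' + b * b' + (a * b' + a' * b) * Real.cos α := by
    simp only [map_add, map_mul, conj_ofReal, mul_re, add_re, add_im, ofReal_re,
      ofReal_im, conj_re, conj_im, exp_ofReal_mul_I_re, exp_ofReal_mul_I_im, mul_im]
    linear_combination b * b' * Real.sin_sq_add_cos_sq α
  have hnormSq (u v : ℝ) :
      normSq (u + v * exp (α * I)) = u ^ 2 + v ^ 2 + 2 * u * v * Real.cos α := by
    simp only [normSq_apply, add_re, add_im, mul_re, mul_im, ofReal_re, ofReal_im,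
      exp_ofReal_mul_I_re, exp_ofReal_mul_I_im]
    linear_combination v ^ 2 * Real.sin_sq_add_cos_sq α
  have hP : 0 ≤ a * a' + b * b' + (a * b' + a' * b) * Real.cos α := by positivity
  rw [hre, ← pow_le_pow_iff_left₀ (by positivity) (by positivity) two_ne_zero, mul_pow,
    Complex.sq_norm, Complex.sq_norm, hnormSq, hnormSq]
  -- `|w|² |w'|² = ⟨w, w'⟩² + (a'b - ab')² (1 - cos² α)`, and `1 - cos² α ≤ 3 cos² α`
  have hcross : (a' * b - a * b') ^ 2 * Real.cos α ^ 2 ≤ ((a * b' + a' * b) * Real.cos α) ^ 2 := by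
    rw [mul_pow]
    exact mul_le_mul_of_nonneg_right
      (by nlinarith [mul_nonneg (mul_nonneg ha hb') (mul_nonneg ha' hb)]) (sq_nonneg _)
  nlinarith [mul_nonneg (sq_nonneg (a' * b - a * b')) (by nlinarith : 0 ≤ 4 * Real.cos α ^ 2 - 1),
    mul_nonneg (by positivity : 0 ≤ a * a' + b * b')
      (by positivity : 0 ≤ (a * b' + a' * b) * Real.cos α)]

lemma norm_sub_le_max_of_norm_mul_norm_le {w w' : ℂ} (h : ‖w‖ * ‖w'‖ ≤ 2 * (w * conj w').re) :
    ‖w - w'‖ ≤ max ‖w‖ ‖w'‖ := by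
  rw [← pow_le_pow_iff_left₀ (norm_nonneg _) (by positivity) two_ne_zero, Complex.sq_norm,
    normSq_sub, ← Complex.sq_norm, ← Complex.sq_norm]
  rcases le_total ‖w‖ ‖w'‖ with hle | hle
  · rw [max_eq_right hle]; nlinarith [norm_nonneg w]
  · rw [max_eq_left hle]; nlinarith [norm_nonneg w']

lemma mem_sector_iff {p x z : ℂ} {k : ℕ} :
    z ∈ sector p x k ↔ ∃ w ∈ wedge (2 * Real.pi / k), z = p + w * (x - p) := by
  simp only [sector, wedge, rot_sub_center]
  constructor
  · rintro ⟨a, b, ha, hb, rfl⟩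
    exact ⟨_, ⟨a, b, ha, hb, rfl⟩, by ring⟩
  · rintro ⟨_, ⟨a, b, ha, hb, rfl⟩, rfl⟩
    exact ⟨a, b, ha, hb, by ring⟩

lemma self_mem_sector {p x : ℂ} {k : ℕ} : p ∈ sector p x k :=
  mem_sector_iff.2 ⟨0, zero_mem_wedge _, by simp⟩

lemma exists_rot_mem_sector {p x : ℂ} (hxp : x ≠ p) {k : ℕ} (hk : 3 ≤ k) (y : ℂ) :
    ∃ n : ℤ, rot p (n * (2 * Real.pi / k)) y ∈ sector p x k := by
  set α := 2 * Real.pi / k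
  obtain ⟨hα0, hαπ⟩ := two_pi_div_mem_Ioo hk
  set w := (y - p) / (x - p)
  have hy : y - p = ‖w‖ * exp (arg w * I) * (x - p) := by
    rw [norm_mul_exp_arg_mul_I, div_mul_cancel₀ _ (sub_ne_zero.2 hxp)]
  -- reduce the argument of `w` modulo `α` into `[0, α)`
  set n := toIcoDiv hα0 0 (arg w)
  set φ := toIcoMod hα0 0 (arg w)
  have hφ : φ ∈ Ico 0 α := by simpa using toIcoMod_mem_Ico hα0 0 (arg w)
  have harg : arg w = φ + n * α := by rw [← zsmul_eq_mul, toIcoMod_add_toIcoDiv_zsmul]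
  refine ⟨-n, mem_sector_iff.2
    ⟨_, ofReal_mul_mem_wedge (norm_nonneg w) (exp_mem_wedge (Ico_subset_Icc_self hφ) ⟨hα0, hαπ⟩),
      ?_⟩⟩
  have hexp : exp ((-n * α : ℝ) * I) * exp ((n * α : ℝ) * I) = 1 := by
    rw [← exp_add, ← exp_zero]
    push_cast
    ring_nf
  rw [← sub_eq_iff_eq_add', rot_sub_center, hy, harg]
  push_cast
  rw [add_mul, exp_add]
  push_cast at hexp
  linear_combination (‖w‖ * exp (φ * I) * (x - p)) * hexp

lemma dM_anti {C : Set ℂ} {p x : ℂ} {k k' : ℕ} (hb : Bornology.IsBounded C) (hk : 3 ≤ k)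
    (hkk' : k ≤ k') : dM C p x k' ≤ dM C p x k := by
  refine diam_mono (inter_subset_inter_right C fun z hz ↦ ?_) (hb.subset inter_subset_left)
  obtain ⟨w, hw, rfl⟩ := mem_sector_iff.1 hz
  have hαα' : 2 * Real.pi / k' ≤ 2 * Real.pi / k :=
    div_le_div_of_nonneg_left (by positivity) (by positivity) (by exact_mod_cast hkk')
  exact mem_sector_iff.2
    ⟨w, wedge_subset_wedge ⟨by positivity, hαα'⟩ (two_pi_div_mem_Ioo hk) hw, rfl⟩

lemma dM_le_of_forall_dist_le {C : Set ℂ} {p x : ℂ} {k : ℕ} {R : ℝ} (hk : 6 ≤ k)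
    (hC : ∀ y ∈ C, dist p y ≤ R) (hR : 0 ≤ R) : dM C p x k ≤ R := by
  have hcos : 1 / 2 ≤ Real.cos (2 * Real.pi / k) := by
    rw [← Real.cos_pi_div_three]
    apply Real.cos_le_cos_of_nonneg_of_le_pi (by positivity) (by linarith [Real.pi_pos])
    rw [div_le_div_iff₀ (by positivity) (by positivity)]
    nlinarith [mul_le_mul_of_nonneg_left (by exact_mod_cast hk : (6 : ℝ) ≤ k) Real.pi_pos.le]
  apply Metric.diam_le_of_forall_dist_le hR
  rintro y ⟨hyC, hy⟩ z ⟨hzC, hz⟩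
  obtain ⟨w, hw, rfl⟩ := mem_sector_iff.1 hy
  obtain ⟨w', hw', rfl⟩ := mem_sector_iff.1 hz
  have hyR := hC _ hyC
  have hzR := hC _ hzC
  rw [dist_comm, dist_eq, add_sub_cancel_left, norm_mul] at hyR hzR
  calc dist (p + w * (x - p)) (p + w' * (x - p)) = ‖w - w'‖ * ‖x - p‖ := by
        rw [dist_eq, add_sub_add_left_eq_sub, ← sub_mul, norm_mul]
    _ ≤ max ‖w‖ ‖w'‖ * ‖x - p‖ := by
        gcongr
        exact norm_sub_le_max_of_norm_mul_norm_le
          (norm_mul_norm_le_two_mul_re_mul_conj hcos hw hw')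
    _ ≤ R := by rw [max_mul_of_nonneg _ _ (norm_nonneg _)]; exact max_le hyR hzR

lemma dist_le_dM {C : Set ℂ} {p x y : ℂ} {k : ℕ} (hsym : IsRotSym C p k) (hk : 3 ≤ k)
    (hxp : x ≠ p) (hpC : p ∈ C) (hb : Bornology.IsBounded C) (hy : y ∈ C) :
    dist p y ≤ dM C p x k := by
  obtain ⟨n, hn⟩ := exists_rot_mem_sector hxp hk y
  have hrot : rot p (n * (2 * Real.pi / k)) y ∈ C :=
    image_rot_int_mul hsym n ▸ mem_image_of_mem _ hy
  rw [← dist_rot_center p (n * (2 * Real.pi / k))]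
  exact dist_le_diam_of_mem (hb.subset inter_subset_left) ⟨hpC, self_mem_sector⟩ ⟨hrot, hn⟩

lemma circumrad_le_dM {C : Set ℂ} {p x : ℂ} {k : ℕ} (hsym : IsRotSym C p k) (hk : 3 ≤ k)
    (hxp : x ≠ p) (hpC : p ∈ C) (hb : Bornology.IsBounded C) : circumrad C p ≤ dM C p x k :=
  Real.iSup_le (fun _ ↦ Real.iSup_le (fun hy ↦ dist_le_dM hsym hk hxp hpC hb hy) diam_nonneg)
    diam_nonneg

lemma dist_le_circumrad {C : Set ℂ} {p y : ℂ} (hb : Bornology.IsBounded C) (hy : y ∈ C) :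
    dist p y ≤ circumrad C p := by
  obtain ⟨r, hr⟩ := hb.subset_closedBall p
  have hbdd : BddAbove (range fun z ↦ ⨆ _ : z ∈ C, dist p z) :=
    ⟨max r 0, forall_mem_range.2 fun _ ↦ Real.iSup_le
      (fun hz ↦ (mem_closedBall'.1 (hr hz)).trans (le_max_left _ _)) (le_max_right _ _)⟩
  exact le_ciSup_of_le hbdd y (ciSup_pos (f := fun _ ↦ dist p y) hy).ge

lemma Nat.le_div_minFac_of_dvd {n k : ℕ} (hn : n ≠ 0) (hk : k ∣ n) (hkn : k ≠ n) :
    k ≤ n / n.minFac := by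
  obtain ⟨m, rfl⟩ := hk
  have hm : m ≠ 1 := by rintro rfl; exact hkn (mul_one k).symm
  have hm0 : m ≠ 0 := by rintro rfl; exact hn (mul_zero k)
  rw [Nat.le_div_iff_mul_le (Nat.minFac_pos _)]
  exact Nat.mul_le_mul_left k (Nat.minFac_le_of_dvd (by omega) (dvd_mul_left m k))

theorem stmt_14_general (C : Set ℂ) (p x : ℂ) (kC : ℕ) (hC : IsConvexBody C)
    (hcomp : ¬ kC.Prime) (hmin : 3 ≤ kC.minFac)
    (hsym : IsRotSym C p kC) (hp : p ∈ interior C)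
    (hx : x ∈ frontier C) :
    ((∀ k : ℕ, k ∣ kC → 1 < k → k ≠ kC → dM C p x kC < dM C p x k)
        ↔ dM C p x (kC / kC.minFac) ≠ circumrad C p) ∧
      (dM C p x kC < dM C p x (kC / kC.minFac)
        ↔ dM C p x (kC / kC.minFac) ≠ circumrad C p) := by
  have hb := hC.1.isBounded
  have hpC : p ∈ C := interior_subset hp
  have hxp : x ≠ p := by rintro rfl; exact hx.2 hp
  have hkC0 : 0 < kC := Nat.pos_of_ne_zero (by rintro rfl; simp at hmin)
  set q := kC / kC.minFac
  have hq3 : 3 ≤ q := hmin.trans (Nat.minFac_le_div hkC0 hcomp)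
  have hq_dvd : q ∣ kC := Nat.div_dvd_of_dvd (Nat.minFac_dvd kC)
  have hq_lt : q < kC := Nat.div_lt_self hkC0 (by omega)
  have hdM_kC : dM C p x kC = circumrad C p :=
    le_antisymm
      (dM_le_of_forall_dist_le (by nlinarith [Nat.minFac_sq_le_self hkC0 hcomp])
        (fun _ ↦ dist_le_circumrad hb) (dist_self p ▸ dist_le_circumrad hb hpC))
      (circumrad_le_dM hsym (by omega) hxp hpC hb)
  have hR_le_q : circumrad C p ≤ dM C p x q :=
    circumrad_le_dM (hsym.of_dvd hq_dvd hkC0.ne') hq3 hxp hpC hb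
  have hq_le : ∀ k, k ∣ kC → 1 < k → k ≠ kC → dM C p x q ≤ dM C p x k := fun k hk hk1 hkC ↦
    dM_anti hb (hmin.trans (Nat.minFac_le_of_dvd hk1 hk))
      (Nat.le_div_minFac_of_dvd hkC0.ne' hk hkC)
  rw [hdM_kC]
  have hlt_iff : circumrad C p < dM C p x q ↔ dM C p x q ≠ circumrad C p :=
    ⟨ne_of_gt, fun h ↦ hR_le_q.lt_of_ne' h⟩
  exact ⟨⟨fun h ↦ hlt_iff.1 (h q hq_dvd (by omega) hq_lt.ne),
    fun h k hk hk1 hkC ↦ (hlt_iff.2 h).trans_le (hq_le k hk hk1 hkC)⟩, hlt_iff⟩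

/-- For a multi-rotationally symmetric planar convex body with composite
maximal degree `k_C` and minimal degree `minFac k_C ≥ 3`, letting
`q = k_C / minFac k_C` be the largest divisor of `k_C` smaller than `k_C`,
the minimum of the values `d_M(P_k)` over divisors `k > 1` of `k_C` is attained
uniquely by `d_M(P_{k_C})` — equivalently `d_M(P_q) > d_M(P_{k_C})` —
iff `d_M(P_q) ≠ R`. -/
theorem stmt_14 (C : Set ℂ) (p x : ℂ) (kC : ℕ) (hC : IsConvexBody C)
    (hk2 : 2 ≤ kC) (hcomp : ¬ kC.Prime) (hmin : 3 ≤ kC.minFac)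
    (hsym : IsRotSym C p kC) (hp : p ∈ interior C)
    (hx : x ∈ frontier C) (hxr : dist p x = infDist p (frontier C)) :
    ((∀ k : ℕ, k ∣ kC → 1 < k → k ≠ kC → dM C p x kC < dM C p x k)
        ↔ dM C p x (kC / kC.minFac) ≠ circumrad C p) ∧
      (dM C p x kC < dM C p x (kC / kC.minFac)
        ↔ dM C p x (kC / kC.minFac) ≠ circumrad C p) :=
  stmt_14_general C p x kC hC hcomp hmin hsym hp hx
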